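/- arXiv:2109.12285 — 2 statements merged into one kernel-verified Lean document; each statement's English description precedes it below -/
import Mathlib

section
/- Let A_0, …, A_{m−1} be simple N×N real matrices and W = { w ∈ ℝᴺ : ∑_{i=1}^N w_i = 0 }. For k ∈ ℕ, let N_k be the number of words (ℓ₁,…,ℓ_k) ∈ {0,…,m−1}^k such that the product A_{ℓ₁}⋯A_{ℓ_k} has at most one nonzero row. Then the limit lim_{k→∞} ( 1 − N_k/m^k )^{1/k} exists and equals ρ_1(A_0|_W, …, A_{m−1}|_W), the L_1-spectral radius of the restrictions of the A_i to W. -/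
open MeasureTheory Metric Filter Set Pointwise

/-- A matrix is simple if every column contains exactly one entry `1` and all other entries `0`. -/
def IsSimple {I : Type*} (T : Matrix I I ℝ) : Prop :=
  ∀ b, ∃ a, T a b = 1 ∧ ∀ a', a' ≠ a → T a' b = 0

/-- The subspace `W = { w : ∑ i, w i = 0 }`. -/
noncomputable def Wsub (I : Type*) [Fintype I] : Submodule ℝ (I → ℝ) :=
  LinearMap.ker ((∑ i : I, LinearMap.proj i) : (I → ℝ) →ₗ[ℝ] ℝ)

/-- The operator norm of the restriction of `T` to the subspace `U` (for `U` invariant under `T`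
this is the norm of `T|_U`). -/
noncomputable def opNormOn {I : Type*} [Fintype I] (U : Submodule ℝ (I → ℝ))
    (T : Matrix I I ℝ) : ℝ :=
  sSup {c : ℝ | ∃ u ∈ U, ‖u‖ ≤ 1 ∧ c = ‖T.mulVec u‖}

/-- The `L_p`-spectral radius of the family `A` of matrices restricted to the subspace `U`:
`ρ_p = lim_k ( m^{-k} ∑_{words w of length k} ‖(A_{w₁}⋯A_{w_k})|_U‖^p )^{1/(pk)}`. -/
noncomputable def lpRadiusOn {I ι : Type*} [Fintype I] [DecidableEq I] [Fintype ι]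
    (U : Submodule ℝ (I → ℝ)) (A : ι → Matrix I I ℝ) (p : ℝ) : ℝ :=
  limUnder Filter.atTop fun k : ℕ =>
    (((Fintype.card ι : ℝ) ^ k)⁻¹ *
      ∑ w : Fin k → ι, opNormOn U ((List.ofFn fun i => A (w i)).prod) ^ p) ^ (1 / (p * k))

/-!
A simple matrix is the 0/1 matrix of a self-map `f` of the index set: its nonzero rows form the
range of `f`, and products of simple matrices correspond to compositions. On `W` such a matrix
vanishes when `f` is constant and otherwise has sup-operator norm between `1` and `N`, so the sum
defining `ρ₁` is comparable, up to the factor `N`, to the number `b k = m ^ k - N_k` of words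
whose product has at least two nonzero rows. Since `b (k + l) ≤ b k * b l`, Fekete's lemma makes
`(b k) ^ (1 / k)` converge, and the squeeze gives the same limit for `ρ₁`.
-/

open Matrix Topology

theorem exists_tendsto_rpow_one_div_of_submultiplicative {b : ℕ → ℕ}
    (hb : ∀ k l, b (k + l) ≤ b k * b l) :
    ∃ L, Tendsto (fun k : ℕ => (b k : ℝ) ^ (1 / k : ℝ)) atTop (𝓝 L) := by
  by_cases hzero : ∃ k₀, b k₀ = 0
  · obtain ⟨k₀, hk₀⟩ := hzero
    refine ⟨0, tendsto_const_nhds.congr' ?_⟩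
    filter_upwards [eventually_gt_atTop k₀] with k hk
    have hbk : b k = 0 := by
      simpa [hk₀, Nat.add_sub_cancel' hk.le] using hb k₀ (k - k₀)
    have hk' : (0 : ℝ) < k := by exact_mod_cast Nat.zero_lt_of_lt hk
    rw [hbk, Nat.cast_zero, Real.zero_rpow (one_div_pos.2 hk').ne']
  · push Not at hzero
    have hpos (k : ℕ) : (0 : ℝ) < b k := by exact_mod_cast Nat.pos_of_ne_zero (hzero k)
    -- Fekete's lemma for the subadditive sequence `log b`, which is nonnegative as `b ≥ 1`.
    have hsub : Subadditive fun k => Real.log (b k) := fun k l => by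
      rw [← Real.log_mul (hpos k).ne' (hpos l).ne']
      exact Real.log_le_log (hpos _) (by exact_mod_cast hb k l)
    have hbdd : BddBelow (range fun k : ℕ => Real.log (b k) / k) :=
      ⟨0, forall_mem_range.2 fun k => div_nonneg (Real.log_natCast_nonneg _) k.cast_nonneg⟩
    refine ⟨Real.exp hsub.lim,
      ((Real.continuous_exp.tendsto _).comp (hsub.tendsto_lim hbdd)).congr fun k => ?_⟩
    simp only [Function.comp, Real.rpow_def_of_pos (hpos k), mul_one_div]

theorem Filter.Tendsto.rpow_one_div_div_pow {x : ℕ → ℝ} {L c : ℝ} (hx : ∀ k, 0 ≤ x k)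
    (hc : 0 ≤ c) (h : Tendsto (fun k : ℕ => x k ^ (1 / k : ℝ)) atTop (𝓝 L)) :
    Tendsto (fun k : ℕ => (x k / c ^ k) ^ (1 / k : ℝ)) atTop (𝓝 (L / c)) := by
  refine (h.div_const c).congr' ?_
  filter_upwards [eventually_ne_atTop 0] with k hk
  rw [Real.div_rpow (hx k) (by positivity), one_div, Real.pow_rpow_inv_natCast hc hk]

theorem tendsto_rpow_one_div_of_le_of_le_mul {b s : ℕ → ℝ} {C L : ℝ} (hC : 0 ≤ C)
    (hb : ∀ k, 0 ≤ b k) (hbs : ∀ k, b k ≤ s k) (hsb : ∀ k, s k ≤ C * b k)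
    (h : Tendsto (fun k : ℕ => b k ^ (1 / k : ℝ)) atTop (𝓝 L)) :
    Tendsto (fun k : ℕ => s k ^ (1 / k : ℝ)) atTop (𝓝 L) := by
  obtain rfl | hC := hC.eq_or_lt
  · have hsb : s = b :=
      funext fun k => le_antisymm ((zero_mul (b k) ▸ hsb k).trans (hb k)) (hbs k)
    rwa [hsb]
  have hCk : Tendsto (fun k : ℕ => C ^ (1 / k : ℝ)) atTop (𝓝 1) := by
    simpa [Function.comp_def] using ((Real.continuousAt_const_rpow hC.ne').tendsto).comp
      (tendsto_const_div_atTop_nhds_zero_nat 1)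
  have hup := hCk.mul h
  rw [one_mul] at hup
  refine tendsto_of_tendsto_of_tendsto_of_le_of_le h hup
    (fun k => Real.rpow_le_rpow (hb k) (hbs k) (by positivity)) fun k => ?_
  rw [← Real.mul_rpow hC.le (hb k)]
  exact Real.rpow_le_rpow ((hb k).trans (hbs k)) (hsb k) (by positivity)

section Words

variable {ι M : Type*} [Monoid M]

def wordProd (F : ι → M) {k : ℕ} (w : Fin k → ι) : M :=
  (List.ofFn fun i => F (w i)).prod

theorem wordProd_append (F : ι → M) {k l : ℕ} (v : Fin k → ι) (w : Fin l → ι) :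
    wordProd F (Fin.append v w) = wordProd F v * wordProd F w := by
  simp [wordProd, List.ofFn_add]

theorem wordProd_mem {S : Submonoid M} {F : ι → M} (hF : ∀ i, F i ∈ S) {k : ℕ}
    (w : Fin k → ι) : wordProd F w ∈ S :=
  S.list_prod_mem (List.forall_mem_ofFn_iff.2 fun i => hF (w i))

noncomputable def wordCount (F : ι → M) (P : M → Prop) (k : ℕ) : ℕ :=
  {w : Fin k → ι | P (wordProd F w)}.ncard

theorem wordCount_add_le [Finite ι] {S : Submonoid M} {F : ι → M} (hF : ∀ i, F i ∈ S)
    {P : M → Prop} (hP : ∀ x ∈ S, ∀ y ∈ S, P (x * y) → P x ∧ P y) (k l : ℕ) :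
    wordCount F P (k + l) ≤ wordCount F P k * wordCount F P l := by
  rw [wordCount, wordCount, wordCount, ← ncard_prod,
    ← ncard_image_of_injective _ (Fin.appendEquiv k l).injective]
  refine ncard_le_ncard (fun w hw => ?_) (toFinite _)
  obtain ⟨⟨v, v'⟩, rfl⟩ := (Fin.appendEquiv k l).surjective w
  refine ⟨(v, v'), hP _ (wordProd_mem hF v) _ (wordProd_mem hF v') ?_, rfl⟩
  rw [← wordProd_append]
  exact hw

theorem one_sub_wordCount_div [Fintype ι] [Nonempty ι] (F : ι → M) (P : M → Prop) (k : ℕ) :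
    1 - (wordCount F P k : ℝ) / Fintype.card ι ^ k
      = wordCount F (¬ P ·) k / Fintype.card ι ^ k := by
  have hcount : wordCount F P k + wordCount F (¬ P ·) k = Fintype.card ι ^ k := by
    rw [wordCount, wordCount, ← compl_ofPred, ncard_add_ncard_compl, Nat.card_eq_fintype_card,
      Fintype.card_fun, Fintype.card_fin]
  rw [eq_div_iff (by positivity), sub_mul, div_mul_cancel₀ _ (by positivity), one_mul,
    sub_eq_iff_eq_add']
  exact_mod_cast hcount.symm

end Words

def nonzeroRows {m n R : Type*} [Zero R] (T : Matrix m n R) : Set m :=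
  {a | ∃ b, T a b ≠ 0}

section FunMatrix

variable {I : Type*} [DecidableEq I]

def funMatrix (f : I → I) : Matrix I I ℝ :=
  Matrix.of fun a b => if a = f b then 1 else 0

theorem nonzeroRows_funMatrix (f : I → I) : nonzeroRows (funMatrix f) = range f := by
  ext a
  simp [nonzeroRows, funMatrix, eq_comm]

theorem isSimple_funMatrix (f : I → I) : IsSimple (funMatrix f) :=
  fun b => ⟨f b, by simp [funMatrix], fun a ha => by simp [funMatrix, ha]⟩

theorem IsSimple.exists_eq_funMatrix {T : Matrix I I ℝ} (hT : IsSimple T) :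
    ∃ f, T = funMatrix f := by
  choose f hf₁ hf₀ using hT
  refine ⟨f, Matrix.ext fun a b => ?_⟩
  by_cases h : a = f b
  · simp [funMatrix, h, hf₁ b]
  · simp [funMatrix, h, hf₀ b a h]

variable [Fintype I]

theorem funMatrix_comp (f g : I → I) : funMatrix (f ∘ g) = funMatrix f * funMatrix g := by
  ext a b
  simp [funMatrix, Matrix.mul_apply]

def simpleMatrices (I : Type*) [Fintype I] [DecidableEq I] : Submonoid (Matrix I I ℝ) where
  carrier := {T | IsSimple T}
  mul_mem' {S T} hS hT := by
    obtain ⟨f, rfl⟩ := hS.exists_eq_funMatrix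
    obtain ⟨g, rfl⟩ := hT.exists_eq_funMatrix
    rw [mem_ofPred_eq, ← funMatrix_comp]
    exact isSimple_funMatrix _
  one_mem' := fun b => ⟨b, by simp, fun a ha => by simp [ha]⟩

theorem not_subsingleton_nonzeroRows_of_mul {S T : Matrix I I ℝ} (hS : IsSimple S)
    (hT : IsSimple T) (h : ¬ (nonzeroRows (S * T)).Subsingleton) :
    ¬ (nonzeroRows S).Subsingleton ∧ ¬ (nonzeroRows T).Subsingleton := by
  obtain ⟨f, rfl⟩ := hS.exists_eq_funMatrix
  obtain ⟨g, rfl⟩ := hT.exists_eq_funMatrix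
  rw [← funMatrix_comp, nonzeroRows_funMatrix, range_comp] at h
  rw [nonzeroRows_funMatrix, nonzeroRows_funMatrix]
  exact ⟨fun hf => h (hf.anti (image_subset_range f _)), fun hg => h (hg.image f)⟩

theorem funMatrix_mulVec_apply (f : I → I) (u : I → ℝ) (a : I) :
    (funMatrix f *ᵥ u) a = ∑ b with f b = a, u b := by
  simp [funMatrix, Matrix.mulVec, dotProduct, Finset.sum_filter, eq_comm]

theorem norm_funMatrix_mulVec_le (f : I → I) (u : I → ℝ) :
    ‖funMatrix f *ᵥ u‖ ≤ Fintype.card I * ‖u‖ := by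
  refine (pi_norm_le_iff_of_nonneg (by positivity)).2 fun a => ?_
  rw [funMatrix_mulVec_apply]
  calc ‖∑ b with f b = a, u b‖ ≤ ∑ b with f b = a, ‖u‖ :=
        norm_sum_le_of_le _ fun b _ => norm_le_pi_norm u b
    _ ≤ ∑ _b : I, ‖u‖ := Finset.sum_le_sum_of_subset_of_nonneg (Finset.filter_subset _ _)
        fun _ _ _ => norm_nonneg u
    _ = Fintype.card I * ‖u‖ := by simp

end FunMatrix

section OpNormOn

variable {I : Type*} [Fintype I] (U : Submodule ℝ (I → ℝ)) (T : Matrix I I ℝ)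

theorem bddAbove_norm_mulVec_unitBall :
    BddAbove {c : ℝ | ∃ u ∈ U, ‖u‖ ≤ 1 ∧ c = ‖T *ᵥ u‖} := by
  let L := LinearMap.toContinuousLinearMap (Matrix.mulVecLin T)
  refine ⟨‖L‖, ?_⟩
  rintro c ⟨u, -, hu, rfl⟩
  calc ‖T *ᵥ u‖ = ‖L u‖ := rfl
    _ ≤ ‖L‖ * ‖u‖ := L.le_opNorm u
    _ ≤ ‖L‖ := mul_le_of_le_one_right (norm_nonneg L) hu

variable {U T}

theorem norm_mulVec_le_opNormOn {u : I → ℝ} (hu : u ∈ U) (hu₁ : ‖u‖ ≤ 1) :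
    ‖T *ᵥ u‖ ≤ opNormOn U T :=
  le_csSup (bddAbove_norm_mulVec_unitBall U T) ⟨u, hu, hu₁, rfl⟩

theorem opNormOn_nonneg : 0 ≤ opNormOn U T := by
  simpa using norm_mulVec_le_opNormOn (T := T) U.zero_mem (by simp)

theorem opNormOn_le {C : ℝ} (hC : 0 ≤ C)
    (h : ∀ u ∈ U, ‖u‖ ≤ 1 → ‖T *ᵥ u‖ ≤ C) : opNormOn U T ≤ C :=
  Real.sSup_le (by rintro c ⟨u, hu, hu₁, rfl⟩; exact h u hu hu₁) hC

end OpNormOn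

section Wsub

variable {I : Type*} [Fintype I]

theorem mem_Wsub {u : I → ℝ} : u ∈ Wsub I ↔ ∑ i, u i = 0 := by
  simp [Wsub]

variable [DecidableEq I] {T : Matrix I I ℝ}

theorem IsSimple.opNormOn_Wsub_eq_zero (hT : IsSimple T) (h : (nonzeroRows T).Subsingleton) :
    opNormOn (Wsub I) T = 0 := by
  obtain ⟨f, rfl⟩ := hT.exists_eq_funMatrix
  rw [nonzeroRows_funMatrix] at h
  refine le_antisymm (opNormOn_le le_rfl fun u hu _ => le_of_eq ?_) opNormOn_nonneg
  -- A row of `funMatrix f` is either zero or, for the single value of `f`, all ones.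
  suffices funMatrix f *ᵥ u = 0 by simp [this]
  ext a
  rw [funMatrix_mulVec_apply, Pi.zero_apply]
  by_cases ha : a ∈ range f
  · rw [Finset.filter_true_of_mem fun b _ => h (mem_range_self b) ha]
    exact mem_Wsub.1 hu
  · rw [Finset.filter_false_of_mem fun b _ hb => ha ⟨b, hb⟩, Finset.sum_empty]

theorem IsSimple.one_le_opNormOn_Wsub (hT : IsSimple T) (h : ¬ (nonzeroRows T).Subsingleton) :
    1 ≤ opNormOn (Wsub I) T := by
  obtain ⟨f, rfl⟩ := hT.exists_eq_funMatrix
  rw [nonzeroRows_funMatrix] at h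
  obtain ⟨_, ⟨b₁, rfl⟩, _, ⟨b₂, rfl⟩, hne⟩ := not_subsingleton_iff.1 h
  have hb : b₁ ≠ b₂ := fun h => hne (congrArg f h)
  -- The test vector `e b₁ - e b₂ ∈ W` is mapped to `e (f b₁) - e (f b₂)`.
  set u : I → ℝ := Pi.single b₁ 1 - Pi.single b₂ 1
  have huW : u ∈ Wsub I := by simp [u, mem_Wsub, Finset.sum_sub_distrib]
  have hu₁ : ‖u‖ ≤ 1 := by
    refine (pi_norm_le_iff_of_nonneg zero_le_one).2 fun b => ?_
    by_cases h₁ : b = b₁ <;> by_cases h₂ : b = b₂ <;> simp_all [u]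
  calc (1 : ℝ) = ‖(funMatrix f *ᵥ u) (f b₁)‖ := by
        simp [u, Matrix.mulVec_sub, funMatrix, hne]
    _ ≤ ‖funMatrix f *ᵥ u‖ := norm_le_pi_norm _ _
    _ ≤ opNormOn (Wsub I) (funMatrix f) := norm_mulVec_le_opNormOn huW hu₁

theorem IsSimple.opNormOn_le_card (hT : IsSimple T) (U : Submodule ℝ (I → ℝ)) :
    opNormOn U T ≤ Fintype.card I := by
  obtain ⟨f, rfl⟩ := hT.exists_eq_funMatrix
  exact opNormOn_le (by positivity) fun u _ hu =>
    (norm_funMatrix_mulVec_le f u).trans (mul_le_of_le_one_right (by positivity) hu)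

end Wsub

theorem ncard_le_sum_and_sum_le_mul_ncard {α : Type*} [Fintype α] {p : α → Prop}
    {g : α → ℝ} {C : ℝ} (hzero : ∀ x, ¬ p x → g x = 0)
    (hbound : ∀ x, p x → 1 ≤ g x ∧ g x ≤ C) :
    ({x | p x}.ncard : ℝ) ≤ ∑ x, g x ∧ ∑ x, g x ≤ C * {x | p x}.ncard := by
  classical
  have hsum : ∑ x, g x = ∑ x with p x, g x :=
    (Finset.sum_filter_of_ne fun x _ hx => not_imp_comm.1 (hzero x) hx).symm
  rw [hsum, ncard_eq_toFinset_card', toFinset_ofPred]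
  constructor
  · simpa using
      Finset.card_nsmul_le_sum _ _ 1 fun x hx => (hbound x (Finset.mem_filter.1 hx).2).1
  · simpa [mul_comm] using
      Finset.sum_le_card_nsmul _ _ C fun x hx => (hbound x (Finset.mem_filter.1 hx).2).2

/-- For simple matrices `A_0, …, A_{m-1}`, the limit `lim_k (1 - N_k/m^k)^{1/k}` exists and equals
`ρ_1(A|_W)`, where `N_k` is the number of words whose product has at most one nonzero row. -/
theorem tendsto_one_sub_ratio_rpow {N m : ℕ} (hm : 0 < m)
    (A : Fin m → Matrix (Fin N) (Fin N) ℝ) (hA : ∀ i, IsSimple (A i)) :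
    Filter.Tendsto (fun k : ℕ =>
        ((1 : ℝ) - (Set.ncard {w : Fin k → Fin m |
            {a : Fin N | ∃ b : Fin N, ((List.ofFn fun i => A (w i)).prod) a b ≠ 0}.Subsingleton}
          : ℝ) / (m : ℝ) ^ k) ^ ((1 : ℝ) / k))
      Filter.atTop (nhds (lpRadiusOn (Wsub (Fin N)) A 1)) := by
  let AtMostOneRow (T : Matrix (Fin N) (Fin N) ℝ) : Prop := (nonzeroRows T).Subsingleton
  have : Nonempty (Fin m) := ⟨⟨0, hm⟩⟩
  have hsimple {k : ℕ} (w : Fin k → Fin m) : IsSimple (wordProd A w) :=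
    wordProd_mem (S := simpleMatrices (Fin N)) hA w
  have hsum (k : ℕ) := ncard_le_sum_and_sum_le_mul_ncard (C := N)
    (g := fun w : Fin k → Fin m => opNormOn (Wsub (Fin N)) (wordProd A w))
    (fun w hw => (hsimple w).opNormOn_Wsub_eq_zero (not_not.1 hw))
    (fun w hw => ⟨(hsimple w).one_le_opNormOn_Wsub hw,
      by simpa using (hsimple w).opNormOn_le_card _⟩)
  obtain ⟨L, hL⟩ := exists_tendsto_rpow_one_div_of_submultiplicative
    (wordCount_add_le (S := simpleMatrices (Fin N)) hA (P := (¬ AtMostOneRow ·))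
      fun S hS T hT => not_subsingleton_nonzeroRows_of_mul hS hT)
  have hb := hL.rpow_one_div_div_pow (c := m) (fun k => by positivity) (by positivity)
  have hs := tendsto_rpow_one_div_of_le_of_le_mul N.cast_nonneg (fun k => by positivity)
    (fun k => div_le_div_of_nonneg_right (hsum k).1 (by positivity))
    (fun k => by
      rw [← mul_div_assoc]
      exact div_le_div_of_nonneg_right (hsum k).2 (by positivity)) hb
  have hρ : lpRadiusOn (Wsub (Fin N)) A 1 = L / m :=
    (hs.congr fun k => by simp [wordProd, inv_mul_eq_div]).limUnder_eq
  rw [hρ]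
  refine hb.congr fun k => congrArg (· ^ _) ?_
  have hratio := one_sub_wordCount_div A AtMostOneRow k
  rw [Fintype.card_fin] at hratio
  exact hratio.symm
end

section
/- Let M be an expanding n×n integer matrix, D a digit set for M with attractor G = G(M,D), and Δ a digit set for M such that Q = G(M,Δ) has Lebesgue measure one. Let S ⊆ ℤⁿ be a finite invariant set, T_δ (δ ∈ Δ) the transition matrices indexed by S, and S̄₀ = { a ∈ ℤⁿ : (a + Q) ∩ G ≠ ∅ }. Then there exists p ∈ ℕ such that for every i ∈ S \ S̄₀ and every word (δ₁,…,δ_p) ∈ Δ^p, the i-th row of the product T_{δ₁}⋯T_{δ_p} is zero. -/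
open MeasureTheory Metric Filter Set Pointwise

/-- The point of `EuclideanSpace ℝ (Fin n)` with the integer coordinates `a`. -/
noncomputable def intVec {n : ℕ} (a : Fin n → ℤ) : EuclideanSpace ℝ (Fin n) :=
  (EuclideanSpace.equiv (Fin n) ℝ).symm (fun i => (a i : ℝ))

/-- An integer matrix is expanding if all its (complex) eigenvalues have modulus `> 1`. -/
def IsExpanding {n : ℕ} (M : Matrix (Fin n) (Fin n) ℤ) : Prop :=
  ∀ μ : ℂ, (M.map (Int.cast : ℤ → ℂ)).charpoly.IsRoot μ → 1 < ‖μ‖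

/-- `D ⊆ ℤⁿ` is a digit set for `M`: `0 ∈ D`, `|D| = |det M|`, and the elements of `D` are
pairwise non-congruent modulo the sublattice `Mℤⁿ`. -/
def IsDigitSet {n : ℕ} (M : Matrix (Fin n) (Fin n) ℤ) (D : Finset (Fin n → ℤ)) : Prop :=
  0 ∈ D ∧ D.card = M.det.natAbs ∧
    ∀ d₁ ∈ D, ∀ d₂ ∈ D, (∃ z : Fin n → ℤ, d₁ - d₂ = M.mulVec z) → d₁ = d₂

/-- The attractor `G(M,D) = { ∑_{k=1}^∞ M^{-k} a_k : a_k ∈ D }`. -/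
noncomputable def attractor {n : ℕ} (M : Matrix (Fin n) (Fin n) ℤ) (D : Finset (Fin n → ℤ)) :
    Set (EuclideanSpace ℝ (Fin n)) :=
  {x | ∃ a : ℕ → (Fin n → ℤ), (∀ k, a k ∈ D) ∧
    x = (EuclideanSpace.equiv (Fin n) ℝ).symm
      (∑' k : ℕ, ((M.map (Int.cast : ℤ → ℝ))⁻¹ ^ (k + 1)).mulVec (fun i => ((a k i : ℝ))))}

/-- A set `S ⊆ ℤⁿ` is invariant (w.r.t. `M`, a set `Λ` and digits `Δ`) if for every `s ∈ S`,
`γ ∈ Λ`, `δ ∈ Δ`, whenever `M⁻¹(s + γ - δ)` is an integer point, it belongs to `S`. -/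
def IsInvariantSet {n : ℕ} (M : Matrix (Fin n) (Fin n) ℤ) (Λ Δ : Finset (Fin n → ℤ))
    (S : Set (Fin n → ℤ)) : Prop :=
  ∀ s ∈ S, ∀ γ ∈ Λ, ∀ δ ∈ Δ, ∀ x : Fin n → ℤ, M.mulVec x = s + γ - δ → x ∈ S

/-- The transition matrix `T_δ`, indexed by `S`: `(T_δ)_{a,b} = 1` if `Ma - b + δ ∈ D`, else `0`. -/
noncomputable def transMatrix {n : ℕ} (M : Matrix (Fin n) (Fin n) ℤ) (D : Finset (Fin n → ℤ))
    (S : Finset (Fin n → ℤ)) (δ : Fin n → ℤ) : Matrix S S ℝ :=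
  fun a b => if M.mulVec (a : Fin n → ℤ) - (b : Fin n → ℤ) + δ ∈ D then 1 else 0

/-!
A nonzero entry in row `i` of `T_{δ₀} ⋯ T_{δ_{p-1}}` yields a chain `i = s₀, s₁, …, s_p` in `S`
with `d_k = M s_k - s_{k+1} + δ_k ∈ D`. Telescoping gives
`i + ∑_{k<p} M^{-(k+1)} δ_k - ∑_{k<p} M^{-(k+1)} d_k = M^{-p} s_p`,
so some point of `i + Q` lies within `‖M^{-p} s_p‖` of some point of `G`. As `M` is expanding,
`M⁻¹` has spectral radius `< 1`, hence `M^{-p} → 0` by Gelfand's formula, uniformly on the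
finite set `S`. Since `i + Q` and `G` are disjoint compact sets, this rules out long chains.
-/

open Matrix Topology

attribute [local instance] Matrix.linftyOpNormedAddCommGroup Matrix.linftyOpNormedRing
  Matrix.linftyOpNormedAlgebra

section BanachAlgebra

variable {A : Type*} [NormedRing A] [NormedAlgebra ℂ A] [CompleteSpace A]

theorem spectralRadius_lt_one_of_forall_one_lt_norm_inv (u : Aˣ)
    (hu : ∀ μ ∈ spectrum ℂ (↑u⁻¹ : A), 1 < ‖μ‖) : spectralRadius ℂ (u : A) < 1 := by
  rcases (spectrum ℂ (u : A)).eq_empty_or_nonempty with hempty | hne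
  · simp [spectralRadius, hempty]
  · refine ENNReal.coe_one ▸
      spectrum.spectralRadius_lt_of_forall_lt_of_nonempty hne fun μ hμ => ?_
    have hμ' := hu μ⁻¹ (spectrum.inv₀_mem_inv_iff.mpr hμ)
    rw [norm_inv, one_lt_inv_iff₀] at hμ'
    exact_mod_cast hμ'.2

theorem summable_norm_pow_of_spectralRadius_lt_one {a : A} (ha : spectralRadius ℂ a < 1) :
    Summable fun k : ℕ => ‖a ^ k‖ := by
  obtain ⟨r, hρr, hr1⟩ := ENNReal.lt_iff_exists_nnreal_btwn.mp ha
  have hev :=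
    (spectrum.pow_nnnorm_pow_one_div_tendsto_nhds_spectralRadius a).eventually_lt_const hρr
  refine .of_norm_bounded_eventually_nat (summable_geometric_of_lt_one r.2 (mod_cast hr1)) ?_
  filter_upwards [hev, eventually_gt_atTop 0] with k hk hk0
  rw [one_div, ENNReal.rpow_inv_lt_iff (by positivity), ENNReal.rpow_natCast] at hk
  rw [norm_norm]
  exact_mod_cast hk.le

end BanachAlgebra

theorem Matrix.linfty_opNorm_map_ofReal {m n : Type*} [Fintype m] [Fintype n]
    (X : Matrix m n ℝ) : ‖X.map ((↑) : ℝ → ℂ)‖ = ‖X‖ := by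
  simp [Matrix.linfty_opNorm_def]

theorem Matrix.map_intCast_map_ofRealHom {m n : Type*} (M : Matrix m n ℤ) :
    (M.map (Int.cast : ℤ → ℝ)).map Complex.ofRealHom = M.map (Int.cast : ℤ → ℂ) := by
  ext; simp

theorem Matrix.add_sum_pow_succ_mulVec_eq {ι R : Type*} [Fintype ι] [DecidableEq ι] [Ring R]
    {A B : Matrix ι ι R} (hAB : A * B = 1) {u e : ℕ → ι → R} {p : ℕ}
    (hu : ∀ k < p, u (k + 1) = B *ᵥ u k + e k) :
    u 0 + ∑ k ∈ Finset.range p, A ^ (k + 1) *ᵥ e k = A ^ p *ᵥ u p := by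
  induction p with
  | zero => simp
  | succ p ih =>
    rw [Finset.sum_range_succ, ← add_assoc, ih fun k hk => hu k (by omega), hu p (by omega),
      mulVec_add, mulVec_mulVec, pow_succ, mul_assoc, hAB, mul_one]

theorem Matrix.exists_path_of_prod_ofFn_apply_ne_zero {ι R : Type*} [Fintype ι] [DecidableEq ι]
    [Semiring R] (T : ℕ → Matrix ι ι R) {p : ℕ} {i j : ι}
    (h : (List.ofFn fun k : Fin p => T k).prod i j ≠ 0) :
    ∃ s : ℕ → ι, s 0 = i ∧ ∀ k < p, T k (s k) (s (k + 1)) ≠ 0 := by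
  induction p generalizing T i with
  | zero => exact ⟨fun _ => i, rfl, fun k hk => absurd hk (Nat.not_lt_zero k)⟩
  | succ p ih =>
    rw [List.ofFn_succ, List.prod_cons, mul_apply] at h
    obtain ⟨c, -, hc⟩ := Finset.exists_ne_zero_of_sum_ne_zero h
    obtain ⟨s, hs0, hs⟩ :=
      ih (fun k => T (k + 1)) (i := c) (by simpa using right_ne_zero_of_mul hc)
    refine ⟨fun k => Nat.casesOn k i s, rfl, fun k hk => ?_⟩
    cases k with
    | zero => simpa [hs0] using left_ne_zero_of_mul hc
    | succ k => exact hs k (by omega)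

namespace IsExpanding

variable {n : ℕ} {M : Matrix (Fin n) (Fin n) ℤ}

theorem isUnit_map_complex (hM : IsExpanding M) : IsUnit (M.map (Int.cast : ℤ → ℂ)) :=
  (spectrum.zero_notMem_iff ℂ).mp fun h0 =>
    absurd (hM 0 (mem_spectrum_iff_isRoot_charpoly.mp h0)) (by simp)

theorem isUnit_map_real (hM : IsExpanding M) : IsUnit (M.map (Int.cast : ℤ → ℝ)) := by
  have h := (isUnit_iff_isUnit_det _).mp hM.isUnit_map_complex
  rw [← map_intCast_map_ofRealHom, ← RingHom.mapMatrix_apply, ← RingHom.map_det,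
    isUnit_iff_ne_zero, map_ne_zero] at h
  exact (isUnit_iff_isUnit_det _).mpr h.isUnit

theorem summable_norm_inv_pow (hM : IsExpanding M) :
    Summable fun k : ℕ => ‖(M.map (Int.cast : ℤ → ℝ))⁻¹ ^ k‖ := by
  set φ := (Complex.ofRealHom : ℝ →+* ℂ).mapMatrix (m := Fin n)
  have hinv : φ (M.map (Int.cast : ℤ → ℝ))⁻¹ * M.map (Int.cast : ℤ → ℂ) = 1 := by
    rw [← map_intCast_map_ofRealHom, ← RingHom.mapMatrix_apply, ← map_mul,
      nonsing_inv_mul _ ((isUnit_iff_isUnit_det _).mp hM.isUnit_map_real), map_one]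
  let u : (Matrix (Fin n) (Fin n) ℂ)ˣ := ⟨_, _, hinv, mul_eq_one_comm.mp hinv⟩
  have hu := summable_norm_pow_of_spectralRadius_lt_one <|
    spectralRadius_lt_one_of_forall_one_lt_norm_inv u fun μ hμ =>
      hM μ (mem_spectrum_iff_isRoot_charpoly.mp hμ)
  refine hu.congr fun k => ?_
  rw [← linfty_opNorm_map_ofReal, ← map_pow]
  rfl

theorem tendsto_inv_pow_mulVec (hM : IsExpanding M) (v : Fin n → ℝ) :
    Tendsto (fun k : ℕ => (M.map (Int.cast : ℤ → ℝ))⁻¹ ^ k *ᵥ v) atTop (𝓝 0) := by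
  have hpow : Tendsto (fun k : ℕ => (M.map (Int.cast : ℤ → ℝ))⁻¹ ^ k) atTop (𝓝 0) :=
    tendsto_zero_iff_norm_tendsto_zero.mpr hM.summable_norm_inv_pow.tendsto_atTop_zero
  have hcont : Continuous fun X : Matrix (Fin n) (Fin n) ℝ => X *ᵥ v :=
    continuous_id.matrix_mulVec continuous_const
  have h := (hcont.tendsto 0).comp hpow
  rw [zero_mulVec] at h
  exact h

theorem isCompact_attractor (hM : IsExpanding M) (D : Finset (Fin n → ℤ)) :
    IsCompact (attractor M D) := by
  set A := (M.map (Int.cast : ℤ → ℝ))⁻¹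
  set K := ∑ d ∈ D, ‖fun i => (d i : ℝ)‖
  have hK : ∀ d ∈ D, ‖fun i => (d i : ℝ)‖ ≤ K := fun d hd =>
    Finset.single_le_sum (fun d _ => norm_nonneg (fun i => (d i : ℝ))) hd
  have hcont :
      Continuous fun a : ℕ → D => ∑' k, A ^ (k + 1) *ᵥ fun i => ((a k : Fin n → ℤ) i : ℝ) := by
    refine continuous_tsum (u := fun k => ‖A ^ (k + 1)‖ * K) (fun k => ?_)
      ((summable_nat_add_iff 1).mpr hM.summable_norm_inv_pow |>.mul_right K) fun k a => ?_
    · exact (continuous_of_discreteTopology (f := fun d : D =>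
        A ^ (k + 1) *ᵥ fun i => ((d : Fin n → ℤ) i : ℝ))).comp (continuous_apply k)
    · exact (linfty_opNorm_mulVec _ _).trans
        (mul_le_mul_of_nonneg_left (hK _ (a k).2) (norm_nonneg _))
  have hrange : attractor M D = Set.range fun a : ℕ → D => (EuclideanSpace.equiv (Fin n) ℝ).symm
      (∑' k, A ^ (k + 1) *ᵥ fun i => ((a k : Fin n → ℤ) i : ℝ)) := by
    ext x
    constructor
    · rintro ⟨a, ha, rfl⟩
      exact ⟨fun k => ⟨a k, ha k⟩, rfl⟩
    · rintro ⟨a, rfl⟩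
      exact ⟨fun k => a k, fun k => (a k).2, rfl⟩
  rw [hrange]
  exact isCompact_range ((EuclideanSpace.equiv (Fin n) ℝ).symm.continuous.comp hcont)

end IsExpanding

theorem sum_range_mem_attractor {n : ℕ} (M : Matrix (Fin n) (Fin n) ℤ) {D : Finset (Fin n → ℤ)}
    (h0 : 0 ∈ D) {p : ℕ} {a : ℕ → Fin n → ℤ} (ha : ∀ k < p, a k ∈ D) :
    (EuclideanSpace.equiv (Fin n) ℝ).symm (∑ k ∈ Finset.range p,
      (M.map (Int.cast : ℤ → ℝ))⁻¹ ^ (k + 1) *ᵥ fun i => (a k i : ℝ)) ∈ attractor M D := by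
  classical
  refine ⟨fun k => if k < p then a k else 0, fun k => ?_, ?_⟩
  · dsimp only
    split_ifs with hk
    exacts [ha k hk, h0]
  · rw [tsum_eq_sum (s := Finset.range p) fun k hk => by
      simp [Finset.mem_range.not.mp hk, ← Pi.zero_def]]
    refine congrArg _ (Finset.sum_congr rfl fun k hk => ?_)
    simp only [if_pos (Finset.mem_range.mp hk)]

theorem exists_mem_attractor_sub_eq_inv_pow_mulVec {n : ℕ} {M : Matrix (Fin n) (Fin n) ℤ}
    (hM : IsUnit (M.map (Int.cast : ℤ → ℝ))) {D Δ : Finset (Fin n → ℤ)} (h0D : 0 ∈ D)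
    (h0Δ : 0 ∈ Δ) {p : ℕ} {s δ : ℕ → Fin n → ℤ} (hδ : ∀ k < p, δ k ∈ Δ)
    (hs : ∀ k < p, M *ᵥ s k - s (k + 1) + δ k ∈ D) :
    ∃ q ∈ attractor M Δ, ∃ g ∈ attractor M D, intVec (s 0) + q - g =
      (EuclideanSpace.equiv (Fin n) ℝ).symm
        ((M.map (Int.cast : ℤ → ℝ))⁻¹ ^ p *ᵥ fun i => (s p i : ℝ)) := by
  set d := fun k => M *ᵥ s k - s (k + 1) + δ k
  refine ⟨_, sum_range_mem_attractor M h0Δ hδ, _, sum_range_mem_attractor M h0D hs, ?_⟩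
  have hrec : ∀ k < p, (fun i => (s (k + 1) i : ℝ)) = M.map (Int.cast : ℤ → ℝ) *ᵥ
      (fun i => (s k i : ℝ)) + ((fun i => (δ k i : ℝ)) - fun i => (d k i : ℝ)) := by
    intro k _
    ext i
    have hcast : ((M *ᵥ s k) i : ℝ) = (M.map (Int.cast : ℤ → ℝ) *ᵥ fun j => (s k j : ℝ)) i :=
      RingHom.map_mulVec (Int.castRingHom ℝ) M (s k) i
    simp [d, hcast]
  have htel := add_sum_pow_succ_mulVec_eq (u := fun k i => (s k i : ℝ))
    (e := fun k => (fun i => (δ k i : ℝ)) - fun i => (d k i : ℝ))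
    (nonsing_inv_mul _ ((isUnit_iff_isUnit_det _).mp hM)) hrec
  simp only [mulVec_sub, Finset.sum_sub_distrib] at htel
  rw [← htel, intVec, ← map_add, ← map_sub, add_sub_assoc]

theorem eventually_prod_transMatrix_apply_eq_zero {n : ℕ} {M : Matrix (Fin n) (Fin n) ℤ}
    (hM : IsExpanding M) {D Δ : Finset (Fin n → ℤ)} (h0D : 0 ∈ D) (h0Δ : 0 ∈ Δ)
    {S : Finset (Fin n → ℤ)} {i : S}
    (hi : ((fun x => intVec (i : Fin n → ℤ) + x) '' attractor M Δ) ∩ attractor M D = ∅) :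
    ∀ᶠ p in atTop, ∀ w : Fin p → Δ, ∀ b : S,
      (List.ofFn fun j => transMatrix M D S ↑(w j)).prod i b = 0 := by
  classical
  obtain ⟨ε, hε, hdisj⟩ := (Set.disjoint_iff_inter_eq_empty.mpr hi).exists_thickenings
    ((hM.isCompact_attractor Δ).image (continuous_const.add continuous_id))
    (hM.isCompact_attractor D).isClosed
  have hsmall : ∀ᶠ p in atTop, ∀ t ∈ S, ‖(EuclideanSpace.equiv (Fin n) ℝ).symm
      ((M.map (Int.cast : ℤ → ℝ))⁻¹ ^ p *ᵥ fun j => (t j : ℝ))‖ < ε :=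
    (eventually_all_finset S).mpr fun t _ =>
      (((EuclideanSpace.equiv (Fin n) ℝ).symm.continuous.tendsto' 0 0 (map_zero _)).comp
        (hM.tendsto_inv_pow_mulVec _)).norm.eventually_lt_const (by simpa using hε)
  filter_upwards [hsmall] with p hp w b
  by_contra hne
  let δ : ℕ → Fin n → ℤ := fun k => if hk : k < p then w ⟨k, hk⟩ else 0
  have hword : (List.ofFn fun j => transMatrix M D S ↑(w j)) =
      List.ofFn fun j : Fin p => transMatrix M D S (δ j) := by
    simp [δ]
  rw [hword] at hne
  obtain ⟨s, hs0, hs⟩ := exists_path_of_prod_ofFn_apply_ne_zero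
    (fun k => transMatrix M D S (δ k)) hne
  obtain ⟨q, hq, g, hg, hqg⟩ := exists_mem_attractor_sub_eq_inv_pow_mulVec
    hM.isUnit_map_real h0D h0Δ (p := p) (s := fun k => s k) (δ := δ)
    (fun k hk => by simp [δ, hk]) (fun k hk => by simpa [transMatrix] using hs k hk)
  rw [hs0] at hqg
  refine Set.disjoint_left.mp hdisj (self_subset_thickening hε _ ⟨q, hq, rfl⟩)
    (mem_thickening_iff.mpr ⟨g, hg, ?_⟩)
  rw [dist_eq_norm, hqg]
  exact hp _ (s p).2

theorem exists_row_zero_of_not_meet_general {n : ℕ} (M : Matrix (Fin n) (Fin n) ℤ)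
    (hM : IsExpanding M) (D Δ : Finset (Fin n → ℤ)) (hD : IsDigitSet M D)
    (hΔ : IsDigitSet M Δ)
    (S : Finset (Fin n → ℤ)) :
    ∃ p : ℕ, 0 < p ∧ ∀ i : S,
      ((fun x => intVec (i : Fin n → ℤ) + x) '' attractor M Δ) ∩ attractor M D = ∅ →
      ∀ w : Fin p → Δ, ∀ b : S,
        ((List.ofFn fun j => transMatrix M D S ↑(w j)).prod) i b = 0 := by
  have hrows := eventually_all.mpr fun i : S => eventually_imp_distrib_left.mpr
    fun hi => eventually_prod_transMatrix_apply_eq_zero (i := i) hM hD.1 hΔ.1 hi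
  obtain ⟨p, hp, hpos⟩ := (hrows.and (eventually_gt_atTop 0)).exists
  exact ⟨p, hpos, hp⟩

/-- For every `i ∈ S` outside `S̄₀ = {a : (a+Q) ∩ G ≠ ∅}` there is `p` such that the `i`-th row of
every product of `p` transition matrices vanishes. -/
theorem exists_row_zero_of_not_meet {n : ℕ} (M : Matrix (Fin n) (Fin n) ℤ)
    (hM : IsExpanding M) (D Δ : Finset (Fin n → ℤ)) (hD : IsDigitSet M D)
    (hΔ : IsDigitSet M Δ) (hQtile : volume (attractor M Δ) = 1)
    (S : Finset (Fin n → ℤ)) (hSinv : IsInvariantSet M D Δ ↑S) :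
    ∃ p : ℕ, 0 < p ∧ ∀ i : S,
      ((fun x => intVec (i : Fin n → ℤ) + x) '' attractor M Δ) ∩ attractor M D = ∅ →
      ∀ w : Fin p → Δ, ∀ b : S,
        ((List.ofFn fun j => transMatrix M D S ↑(w j)).prod) i b = 0 :=
  exists_row_zero_of_not_meet_general M hM D Δ hD hΔ S
end
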